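/- arXiv:1307.2418 — 3 statements merged into one kernel-verified Lean document; each statement's English description precedes it below -/
import Mathlib

section
/- A subset E of the real numbers is statistically downward compact if and only if E is bounded above. -/
/-!
If `E` is bounded above, extract a monotone or an antitone subsequence from any sequence in `E`
(infinitary Erdős–Szekeres). An antitone sequence has no positive jumps at all, and a monotone
one converges, so its jumps tend to `0`; either way only finitely many jumps reach a given `ε`.
If `E` is unbounded above, choose points of `E` each exceeding the previous one by more than `1`;
then along any subsequence every jump is at least `1`, so the jump density is `1`, not `0`.
-/

def StatDownQC (x : ℕ → ℝ) : Prop :=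
  ∀ ε > (0:ℝ), Filter.Tendsto
    (fun n => (((Finset.range n).filter (fun k => ε ≤ x (k+1) - x k)).card : ℝ) / n)
    Filter.atTop (nhds 0)

def StatDownCompact (E : Set ℝ) : Prop :=
  ∀ x : ℕ → ℝ, (∀ n, x n ∈ E) → ∃ φ : ℕ → ℕ, StrictMono φ ∧ StatDownQC (x ∘ φ)

open Filter Topology

theorem exists_strictMono_subseq_monotone_or_antitone {α : Type*} [LinearOrder α]
    (x : ℕ → α) : ∃ φ : ℕ → ℕ, StrictMono φ ∧ (Monotone (x ∘ φ) ∨ Antitone (x ∘ φ)) := by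
  obtain ⟨g, hmono | hanti⟩ := exists_increasing_or_nonincreasing_subseq (· ≤ ·) x
  · exact ⟨g, g.strictMono, .inl (monotone_iff_forall_lt.2 hmono)⟩
  · exact ⟨g, g.strictMono, .inr (StrictAnti.antitone fun m n h => not_le.1 (hanti m n h))⟩

theorem statDownQC_of_eventually_sub_lt {y : ℕ → ℝ}
    (h : ∀ ε > 0, ∀ᶠ k in atTop, y (k + 1) - y k < ε) : StatDownQC y := by
  intro ε hε
  obtain ⟨N, hN⟩ := eventually_atTop.1 (h ε hε)
  have hsub : ∀ n, (Finset.range n).filter (fun k => ε ≤ y (k + 1) - y k) ⊆ Finset.range N := by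
    intro n k hk
    simp only [Finset.mem_filter, Finset.mem_range] at hk ⊢
    by_contra! hNk
    exact (hN k hNk).not_ge hk.2
  have hbound : ∀ n : ℕ,
      (((Finset.range n).filter (fun k => ε ≤ y (k + 1) - y k)).card : ℝ) / n ≤ N / n := by
    intro n
    gcongr
    exact_mod_cast (Finset.card_le_card (hsub n)).trans (Finset.card_range N).le
  exact squeeze_zero (fun n => by positivity) hbound (tendsto_const_div_atTop_nhds_zero_nat _)

theorem Antitone.statDownQC {y : ℕ → ℝ} (hy : Antitone y) : StatDownQC y :=
  statDownQC_of_eventually_sub_lt fun ε hε =>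
    Eventually.of_forall fun k => by linarith [hy k.le_succ]

theorem Monotone.statDownQC_of_bddAbove {y : ℕ → ℝ} (hy : Monotone y)
    (hbdd : BddAbove (Set.range y)) : StatDownQC y := by
  have hlim := tendsto_atTop_ciSup hy hbdd
  have hdiff : Tendsto (fun k => y (k + 1) - y k) atTop (𝓝 0) := by
    simpa using (hlim.comp (tendsto_add_atTop_nat 1)).sub hlim
  exact statDownQC_of_eventually_sub_lt fun ε hε => hdiff.eventually_lt_const hε

theorem not_statDownQC_of_forall_le_sub {y : ℕ → ℝ} {ε : ℝ} (hε : 0 < ε)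
    (h : ∀ k, ε ≤ y (k + 1) - y k) : ¬ StatDownQC y := by
  intro hy
  have hone : ∀ᶠ n : ℕ in atTop,
      (((Finset.range n).filter (fun k => ε ≤ y (k + 1) - y k)).card : ℝ) / n = 1 := by
    filter_upwards [eventually_ge_atTop 1] with n hn
    rw [Finset.filter_true_of_mem fun k _ => h k, Finset.card_range]
    exact div_self (by positivity)
  have := tendsto_nhds_unique ((hy ε hε).congr' hone) tendsto_const_nhds
  norm_num at this

theorem one_le_sub_comp_of_forall_add_one_le {x : ℕ → ℝ} (hx : ∀ n, x n + 1 ≤ x (n + 1))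
    {φ : ℕ → ℕ} (hφ : StrictMono φ) (k : ℕ) : 1 ≤ (x ∘ φ) (k + 1) - (x ∘ φ) k := by
  have hmono : Monotone fun n => x n - n :=
    monotone_nat_of_le_succ fun n => by push_cast; linarith [hx n]
  have hφk : ((φ k : ℕ) : ℝ) + 1 ≤ φ (k + 1) := by exact_mod_cast hφ k.lt_succ_self
  have := hmono (hφ k.lt_succ_self).le
  simp only [Function.comp_apply]
  linarith

theorem exists_seq_mem_forall_add_one_le_of_not_bddAbove {E : Set ℝ} (hE : ¬ BddAbove E) :
    ∃ x : ℕ → ℝ, (∀ n, x n ∈ E) ∧ ∀ n, x n + 1 ≤ x (n + 1) := by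
  have hstep : ∀ b : ℝ, ∃ y ∈ E, b + 1 < y := fun b => not_bddAbove_iff.1 hE (b + 1)
  choose f hfE hf using hstep
  refine ⟨fun n => f^[n + 1] 0, fun n => ?_, fun n => ?_⟩
  · simpa only [Function.iterate_succ_apply'] using hfE (f^[n] 0)
  · simpa only [Function.iterate_succ_apply' f (n + 1)] using (hf (f^[n + 1] 0)).le

theorem statDownCompact_iff_bddAbove (E : Set ℝ) :
    StatDownCompact E ↔ BddAbove E := by
  constructor
  · intro hE
    by_contra hunbdd
    obtain ⟨x, hxE, hx⟩ := exists_seq_mem_forall_add_one_le_of_not_bddAbove hunbdd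
    obtain ⟨φ, hφ, hqc⟩ := hE x hxE
    exact not_statDownQC_of_forall_le_sub one_pos (one_le_sub_comp_of_forall_add_one_le hx hφ) hqc
  · rintro ⟨B, hB⟩ x hxE
    obtain ⟨φ, hφ, hmono | hanti⟩ := exists_strictMono_subseq_monotone_or_antitone x
    · refine ⟨φ, hφ, hmono.statDownQC_of_bddAbove ⟨B, ?_⟩⟩
      rintro _ ⟨n, rfl⟩
      exact hB (hxE (φ n))
    · exact ⟨φ, hφ, hanti.statDownQC⟩
end

section
/- If f : E → ℝ is statistically downward continuous on E ⊆ ℝ, then f is statistically continuous on E, i.e., for any sequence (x_n) in E statistically convergent to ℓ ∈ E, the sequence (f(x_n)) statistically converges to f(ℓ). -/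
def StatConv (x : ℕ → ℝ) (ℓ : ℝ) : Prop :=
  ∀ ε > (0:ℝ), Filter.Tendsto
    (fun n => (((Finset.range n).filter (fun k => ε ≤ |x k - ℓ|)).card : ℝ) / n)
    Filter.atTop (nhds 0)

def StatDownCont (f : ℝ → ℝ) (E : Set ℝ) : Prop :=
  ∀ x : ℕ → ℝ, (∀ n, x n ∈ E) → StatDownQC x → StatDownQC (fun n => f (x n))

open Filter Finset Topology

def HasDensityZero (p : ℕ → Prop) [DecidablePred p] : Prop :=
  Tendsto (fun n => (#{k ∈ range n | p k} : ℝ) / n) atTop (𝓝 0)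

namespace HasDensityZero

variable {p q : ℕ → Prop} [DecidablePred p] [DecidablePred q]

theorem of_card_le (hq : HasDensityZero q) (c : ℕ)
    (h : ∀ n, #{k ∈ range n | p k} ≤ c * #{k ∈ range (c * n) | q k}) : HasDensityZero p := by
  rcases Nat.eq_zero_or_pos c with rfl | hc
  · simp only [zero_mul, Nat.le_zero, card_eq_zero] at h
    simp [HasDensityZero, h]
  have hcn : Tendsto (c * ·) atTop atTop := tendsto_id.const_mul_atTop' hc
  have hlim := (hq.comp hcn).const_mul ((c : ℝ) ^ 2)
  rw [mul_zero] at hlim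
  refine squeeze_zero (fun n => by positivity) (fun n => ?_) hlim
  rcases Nat.eq_zero_or_pos n with rfl | hn
  · simp
  have hc' : (0 : ℝ) < c := by exact_mod_cast hc
  have hn' : (0 : ℝ) < n := by exact_mod_cast hn
  calc (#{k ∈ range n | p k} : ℝ) / n ≤ c * #{k ∈ range (c * n) | q k} / n := by
        gcongr; exact_mod_cast h n
    _ = (c : ℝ) ^ 2 * ((#{k ∈ range (c * n) | q k} : ℝ) / ((c * n : ℕ) : ℝ)) := by
        push_cast; field_simp

theorem mono (hq : HasDensityZero q) (hpq : ∀ k, p k → q k) : HasDensityZero p :=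
  hq.of_card_le 1 fun n => by
    simpa using card_le_card (monotone_filter_right _ fun k _ => hpq k)

theorem or (hp : HasDensityZero p) (hq : HasDensityZero q) :
    HasDensityZero (fun k => p k ∨ q k) := by
  have hlim := hp.add hq
  rw [add_zero] at hlim
  refine squeeze_zero (fun n => by positivity) (fun n => ?_) hlim
  rw [filter_or, ← add_div]
  gcongr
  exact_mod_cast card_union_le _ _

theorem comp_div (hq : HasDensityZero q) {d : ℕ} (hd : 0 < d) :
    HasDensityZero (fun k => q (k / d)) := by
  refine hq.of_card_le d fun n => ?_
  calc #{k ∈ range n | q (k / d)}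
        ≤ #((range d ×ˢ {m ∈ range n | q m}).image fun rm => d * rm.2 + rm.1) := by
        refine card_le_card fun k hk => ?_
        simp only [mem_filter, mem_range] at hk
        simp only [mem_image, mem_product, mem_filter, mem_range, Prod.exists]
        exact ⟨k % d, k / d, ⟨Nat.mod_lt k hd, (Nat.div_le_self k d).trans_lt hk.1, hk.2⟩,
          Nat.div_add_mod k d⟩
    _ ≤ d * #{m ∈ range n | q m} := card_image_le.trans (by simp)
    _ ≤ d * #{m ∈ range (d * n) | q m} := by
        gcongr
        exact Nat.le_mul_of_pos_left n hd

theorem comp_injective (hq : HasDensityZero q) {g : ℕ → ℕ} (hg : g.Injective) {c : ℕ}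
    (hgc : ∀ m, g m < c * (m + 1)) : HasDensityZero (fun m => q (g m)) := by
  refine hq.of_card_le c fun n => ?_
  calc #{m ∈ range n | q (g m)} = #({m ∈ range n | q (g m)}.image g) :=
        (card_image_of_injective _ hg).symm
    _ ≤ #{k ∈ range (c * n) | q k} := by
        refine card_le_card fun k hk => ?_
        simp only [mem_image, mem_filter, mem_range] at hk ⊢
        obtain ⟨m, ⟨hmn, hqm⟩, rfl⟩ := hk
        exact ⟨(hgc m).trans_le (Nat.mul_le_mul_left c hmn), hqm⟩
    _ ≤ c * #{k ∈ range (c * n) | q k} := Nat.le_mul_of_pos_left _ (by have := hgc 0; omega)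

end HasDensityZero

section Alternate

variable {α β : Type*} (ℓ : α) (x : ℕ → α)

def alternate (n : ℕ) : α :=
  if n % 2 = 0 then ℓ else x (n / 2)

@[simp]
theorem alternate_two_mul (m : ℕ) : alternate ℓ x (2 * m) = ℓ := by
  simp [alternate]

@[simp]
theorem alternate_two_mul_add_one (m : ℕ) : alternate ℓ x (2 * m + 1) = x m := by
  simp [alternate, Nat.add_mod, Nat.add_div]

theorem alternate_two_mul_add_two (m : ℕ) : alternate ℓ x (2 * m + 1 + 1) = ℓ :=
  alternate_two_mul ℓ x (m + 1)

theorem comp_alternate (f : α → β) :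
    (fun n => f (alternate ℓ x n)) = alternate (f ℓ) (fun n => f (x n)) := by
  ext n
  unfold alternate
  split_ifs <;> rfl

theorem alternate_mem {E : Set α} (hℓ : ℓ ∈ E) (hx : ∀ n, x n ∈ E) (n : ℕ) :
    alternate ℓ x n ∈ E := by
  unfold alternate
  split_ifs
  exacts [hℓ, hx _]

end Alternate

theorem statDownQC_iff {x : ℕ → ℝ} :
    StatDownQC x ↔ ∀ ε > 0, HasDensityZero fun k => ε ≤ x (k + 1) - x k :=
  Iff.rfl

theorem statConv_iff {x : ℕ → ℝ} {ℓ : ℝ} :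
    StatConv x ℓ ↔ ∀ ε > 0, HasDensityZero fun k => ε ≤ |x k - ℓ| :=
  Iff.rfl

theorem statDownQC_alternate_iff {x : ℕ → ℝ} {ℓ : ℝ} :
    StatDownQC (alternate ℓ x) ↔ StatConv x ℓ := by
  rw [statDownQC_iff, statConv_iff]
  constructor
  · intro hy ε hε
    have hjumps := hy ε hε
    have hjumps_even := hjumps.comp_injective (g := (2 * ·)) (mul_right_injective₀ two_ne_zero)
      (c := 2) (by omega)
    have hjumps_odd := hjumps.comp_injective (g := (2 * · + 1)) (fun a b h => by simpa using h)
      (c := 2) (by omega)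
    refine (hjumps_even.or hjumps_odd).mono fun m hm => ?_
    rw [le_abs, neg_sub] at hm
    simpa [alternate_two_mul_add_two] using hm
  · intro hconv ε hε
    refine ((hconv ε hε).comp_div two_pos).mono fun k hk => ?_
    obtain ⟨m, rfl | rfl⟩ : ∃ m, k = 2 * m ∨ k = 2 * m + 1 := ⟨k / 2, by omega⟩
    · simp only [alternate_two_mul_add_one, alternate_two_mul,
        Nat.mul_div_cancel_left _ two_pos] at hk ⊢
      exact le_abs.2 (.inl hk)
    · simp only [alternate_two_mul_add_two, alternate_two_mul_add_one,
        Nat.mul_add_div two_pos] at hk ⊢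
      exact le_abs.2 (.inr (by simpa using hk))

theorem statDownCont_statCont (f : ℝ → ℝ) (E : Set ℝ) (hf : StatDownCont f E)
    (x : ℕ → ℝ) (hx : ∀ n, x n ∈ E) (ℓ : ℝ) (hℓ : ℓ ∈ E) (hconv : StatConv x ℓ) :
    StatConv (fun n => f (x n)) (f ℓ) := by
  rw [← statDownQC_alternate_iff, ← comp_alternate]
  exact hf _ (alternate_mem ℓ x hℓ hx) (statDownQC_alternate_iff.2 hconv)
end

section
/- If E ⊆ ℝ is statistically downward compact and f : E → ℝ is statistically downward continuous on E, then f is uniformly continuous on E. -/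
/-!
If `f` is not uniformly continuous on `E`, there are `u k, v k ∈ E` with `u k - v k → 0` but
`f (v k) - f (u k) ≥ ε`. Pass to a subsequence along which `u` is statistically downward half
quasi-Cauchy and interleave: `u 0, v 0, u 1, v 1, …` is still statistically downward half
quasi-Cauchy, since its steps are either `v k - u k` or `(u (k+1) - u k) + (u k - v k)`. Its image
under `f`, however, rises by at least `ε` at every even step, so it is not.
-/

open Filter Topology Finset

noncomputable def upJumps (x : ℕ → ℝ) (ε : ℝ) (n : ℕ) : Finset ℕ :=
  {k ∈ range n | ε ≤ x (k + 1) - x k}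

theorem tendsto_natCast_div_of_le_add {c d : ℕ → ℕ} (K : ℕ) (h : ∀ n, c n ≤ d n + K)
    (hd : Tendsto (fun n => (d n : ℝ) / n) atTop (𝓝 0)) :
    Tendsto (fun n => (c n : ℝ) / n) atTop (𝓝 0) := by
  have hbound : Tendsto (fun n : ℕ => (d n : ℝ) / n + K / n) atTop (𝓝 0) := by
    simpa using hd.add (tendsto_const_div_atTop_nhds_zero_nat (K : ℝ))
  refine squeeze_zero (fun n => by positivity) (fun n => ?_) hbound
  rw [← add_div]
  exact div_le_div_of_nonneg_right (by exact_mod_cast h n) n.cast_nonneg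

def interleave {α : Type*} (u v : ℕ → α) (n : ℕ) : α :=
  if Even n then u (n / 2) else v (n / 2)

section Interleave

variable {α β : Type*} {u v : ℕ → α}

@[simp]
theorem interleave_two_mul (k : ℕ) : interleave u v (2 * k) = u k := by
  simp [interleave]

@[simp]
theorem interleave_two_mul_add_one (k : ℕ) : interleave u v (2 * k + 1) = v k := by
  simp [interleave, Nat.add_div_of_dvd_right]

theorem comp_interleave (f : α → β) :
    (fun n => f (interleave u v n)) = interleave (f ∘ u) (f ∘ v) := by
  ext n
  unfold interleave
  split_ifs <;> rfl

theorem interleave_mem {s : Set α} (hu : ∀ k, u k ∈ s) (hv : ∀ k, v k ∈ s)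
    (n : ℕ) : interleave u v n ∈ s := by
  unfold interleave
  split_ifs
  exacts [hu _, hv _]

end Interleave

theorem upJumps_interleave_subset {u v : ℕ → ℝ} {δ : ℝ} {K : ℕ}
    (hK : ∀ k ≥ K, |u k - v k| < δ / 2) (n : ℕ) :
    upJumps (interleave u v) δ n ⊆
      range (2 * K) ∪ (upJumps u (δ / 2) n).image (fun k => 2 * k + 1) := by
  intro j hj
  simp only [upJumps, mem_filter, mem_range] at hj
  obtain ⟨hjn, hjump⟩ := hj
  rcases lt_or_ge j (2 * K) with hjK | hjK
  · exact mem_union_left _ (mem_range.2 hjK)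
  obtain ⟨k, rfl | rfl⟩ := Nat.even_or_odd' j
  · have hsmall := abs_lt.1 (hK k (by omega))
    rw [interleave_two_mul_add_one, interleave_two_mul] at hjump
    linarith
  · have hsmall := abs_lt.1 (hK k (by omega))
    rw [show 2 * k + 1 + 1 = 2 * (k + 1) by ring, interleave_two_mul,
      interleave_two_mul_add_one] at hjump
    refine mem_union_right _ (mem_image.2 ⟨k, ?_, rfl⟩)
    simp only [upJumps, mem_filter, mem_range]
    exact ⟨by omega, by linarith⟩

theorem StatDownQC.interleave_of_sub_tendsto_zero {u v : ℕ → ℝ} (hu : StatDownQC u)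
    (huv : Tendsto (fun k => u k - v k) atTop (𝓝 0)) : StatDownQC (interleave u v) := by
  intro δ hδ
  obtain ⟨K, hK⟩ := eventually_atTop.1 (Metric.tendsto_nhds.1 huv (δ / 2) (half_pos hδ))
  simp only [Real.dist_eq, sub_zero] at hK
  refine tendsto_natCast_div_of_le_add (2 * K) (fun n => ?_) (hu (δ / 2) (half_pos hδ))
  calc (upJumps (interleave u v) δ n).card
      ≤ (range (2 * K) ∪ (upJumps u (δ / 2) n).image (fun k => 2 * k + 1)).card :=
        card_le_card (upJumps_interleave_subset hK n)
    _ ≤ 2 * K + (upJumps u (δ / 2) n).card := by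
        grw [card_union_le, card_range, card_image_le]
    _ = (upJumps u (δ / 2) n).card + 2 * K := add_comm _ _

theorem not_statDownQC_interleave {u v : ℕ → ℝ} {ε : ℝ} (hε : 0 < ε)
    (h : ∀ k, ε ≤ v k - u k) : ¬ StatDownQC (interleave u v) := by
  intro hqc
  have hcard (m : ℕ) : m ≤ (upJumps (interleave u v) ε (2 * m)).card := by
    calc m = ((range m).image (2 * ·)).card := by
          rw [card_image_of_injective _ (mul_right_injective₀ two_ne_zero), card_range]
      _ ≤ _ := by
        refine card_le_card fun j hj => ?_
        obtain ⟨k, hk, rfl⟩ := mem_image.1 hj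
        simp only [upJumps, mem_filter, mem_range, interleave_two_mul,
          interleave_two_mul_add_one]
        exact ⟨by simp at hk; omega, h k⟩
  have hlim := (hqc ε hε).comp (strictMono_mul_left_of_pos two_pos).tendsto_atTop
  have hhalf : ∀ᶠ m : ℕ in atTop,
      (1 / 2 : ℝ) ≤ (upJumps (interleave u v) ε (2 * m)).card / ↑(2 * m) := by
    filter_upwards [eventually_gt_atTop 0] with m hm
    have hm' : (m : ℝ) ≤ (upJumps (interleave u v) ε (2 * m)).card := by
      exact_mod_cast hcard m
    rw [le_div_iff₀ (by positivity)]
    push_cast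
    linarith
  linarith [ge_of_tendsto hlim hhalf]

theorem exists_seq_of_not_uniformContinuousOn {f : ℝ → ℝ} {E : Set ℝ} {ε : ℝ}
    (h : ∀ δ > (0 : ℝ), ∃ x ∈ E, ∃ y ∈ E, |x - y| < δ ∧ ε ≤ |f x - f y|) :
    ∃ u v : ℕ → ℝ, (∀ k, u k ∈ E) ∧ (∀ k, v k ∈ E) ∧
      Tendsto (fun k => u k - v k) atTop (𝓝 0) ∧ ∀ k, ε ≤ f (v k) - f (u k) := by
  have hpair (k : ℕ) : ∃ x ∈ E, ∃ y ∈ E, |x - y| < 1 / (k + 1) ∧ ε ≤ f y - f x := by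
    obtain ⟨x, hx, y, hy, hxy, hfxy⟩ := h (1 / (k + 1)) (by positivity)
    rcases le_abs'.1 hfxy with hneg | hpos
    · exact ⟨x, hx, y, hy, hxy, by linarith⟩
    · exact ⟨y, hy, x, hx, by rwa [abs_sub_comm], hpos⟩
  choose u hu v hv huv hfuv using hpair
  refine ⟨u, v, hu, hv, ?_, hfuv⟩
  exact squeeze_zero_norm (fun k => (huv k).le) tendsto_one_div_add_atTop_nhds_zero_nat

theorem statDownCont_uniformCont (f : ℝ → ℝ) (E : Set ℝ)
    (hE : StatDownCompact E) (hf : StatDownCont f E) :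
    ∀ ε > (0:ℝ), ∃ δ > (0:ℝ), ∀ x ∈ E, ∀ y ∈ E, |x - y| < δ → |f x - f y| < ε := by
  intro ε hε
  by_contra! hcon
  obtain ⟨u, v, hu, hv, huv, hfuv⟩ := exists_seq_of_not_uniformContinuousOn hcon
  obtain ⟨φ, hφ, hqc⟩ := hE u hu
  have hfqc := hf _ (interleave_mem (fun k => hu (φ k)) (fun k => hv (φ k)))
    (hqc.interleave_of_sub_tendsto_zero (huv.comp hφ.tendsto_atTop))
  rw [comp_interleave] at hfqc
  exact not_statDownQC_interleave hε (fun k => hfuv (φ k)) hfqc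
end
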